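/- Let A(h) be the n×n tridiagonal antisymmetric matrix with nonzero superdiagonal entries h = (h_1, ..., h_{n-1}) and A(h') the analogous matrix with entries h' = (h'_1, ..., h'_{n-1}), also all nonzero. Suppose S is an invertible n×n real matrix with S e_1 = e_1, e_2^T S = e_2^T, and S A(h) = A(h') S. Then S is diagonal with diagonal entries (1, ±1, ..., ±1), and |h_i| = |h'_i| for all i = 1, ..., n-1. -/

import Mathlib

/-!
Write `d k` for the diagonal entries of `S`. Read column by column, `S A(h) = A(h') S` is a
three-term recurrence: if columns `k` and `k+1` of `S` are `d k • e k` and `d (k+1) • e (k+1)` and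
`d k * h k = h' k * d (k+1)`, then column `k+2` is `d (k+2) • e (k+2)`, and
`d (k+2) * h (k+1) = h' (k+1) * d (k+1)`. As `A(h)` is antisymmetric, `Sᵀ` intertwines `A(h')` with
`A(h)`, so the same step runs along the rows with `h` and `h'` exchanged, and each of the two steps
supplies the relation the other one needs next. The first column and the second row are given; the
second column follows from the first, and the first row is forced because `x A(h) = 0` and
`x 0 = 0` imply `x = 0`. The two relations at `k` give `d (k+1) ^ 2 = d k ^ 2 = 1`, hence
`|h k| = |h' k|`.
-/

open Matrix

/-- The n×n tridiagonal antisymmetric matrix with superdiagonal entries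
`h 0, h 1, ..., h (n-2)`. -/
def triA (n : ℕ) (h : ℕ → ℝ) : Matrix (Fin n) (Fin n) ℝ :=
  Matrix.of fun i j =>
    if (i : ℕ) + 1 = (j : ℕ) then h i
    else if (j : ℕ) + 1 = (i : ℕ) then -(h j) else 0

def IsDiagCol {m α : Type*} [Zero α] (M : Matrix m m α) (j : m) : Prop :=
  ∀ i, i ≠ j → M i j = 0

theorem mul_apply_of_isDiagCol {m α : Type*} [Fintype m] [NonUnitalNonAssocSemiring α]
    {M : Matrix m m α} {j : m} (hM : IsDiagCol M j) (N : Matrix m m α) (i : m) :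
    (N * M) i j = N i j * M j j := by
  rw [mul_apply, Fintype.sum_eq_single j fun l hl => by rw [hM l hl, mul_zero]]

section

variable {n : ℕ} {a b : ℕ → ℝ}

theorem triA_apply (a : ℕ → ℝ) (i j : Fin n) :
    triA n a i j = if (i : ℕ) + 1 = j then a i else if (j : ℕ) + 1 = i then -a j else 0 :=
  rfl

theorem triA_transpose (a : ℕ → ℝ) : (triA n a)ᵀ = -triA n a := by
  ext i j
  rw [transpose_apply, neg_apply, triA_apply, triA_apply]
  split_ifs <;> first | omega | simp

theorem triA_mulVec (a : ℕ → ℝ) (x : Fin n → ℝ) : triA n a *ᵥ x = -(x ᵥ* triA n a) := by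
  rw [← mulVec_transpose, triA_transpose, neg_mulVec, neg_neg]

theorem vecMul_triA_apply_of_val_eq_zero (a : ℕ → ℝ) (x : Fin n → ℝ) {j l : Fin n}
    (hj : (j : ℕ) = 0) (hl : (l : ℕ) = 1) : (x ᵥ* triA n a) j = -(x l * a 0) := by
  rw [vecMul, dotProduct, Fintype.sum_eq_single l fun i hi => ?_]
  · simp [triA_apply, hj, hl]
  · have : (i : ℕ) ≠ 1 := fun h => hi (Fin.ext (h.trans hl.symm))
    simp [triA_apply, hj]
    omega

theorem vecMul_triA_apply_of_val_eq_succ (a : ℕ → ℝ) (x : Fin n → ℝ) {i j l : Fin n}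
    (hj : (j : ℕ) = i + 1) (hl : (l : ℕ) = i + 2) :
    (x ᵥ* triA n a) j = x i * a i - x l * a j := by
  have hil : i ≠ l := fun h => by omega
  rw [vecMul, dotProduct, Fintype.sum_eq_add i l hil fun r hr => ?_]
  · simp [triA_apply, hj, hl, sub_eq_add_neg]
  · have h1 : (r : ℕ) ≠ i := fun h => hr.1 (Fin.ext h)
    have h2 : (r : ℕ) ≠ l := fun h => hr.2 (Fin.ext h)
    simp only [triA_apply]
    split_ifs <;> first | omega | simp

theorem transpose_mul_triA {M : Matrix (Fin n) (Fin n) ℝ} (hM : M * triA n a = triA n b * M) :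
    Mᵀ * triA n b = triA n a * Mᵀ := by
  have := congrArg transpose hM
  simp only [transpose_mul, triA_transpose, mul_neg, neg_mul, neg_inj] at this
  exact this.symm

theorem eq_zero_of_vecMul_triA_eq_zero (ha : ∀ k, k + 1 < n → a k ≠ 0) {x : Fin n → ℝ}
    (hx : x ᵥ* triA n a = 0) (h0 : ∀ i : Fin n, (i : ℕ) = 0 → x i = 0) : x = 0 := by
  suffices h : ∀ k, (∀ i : Fin n, (i : ℕ) = k → x i = 0) ∧
      ∀ i : Fin n, (i : ℕ) = k + 1 → x i = 0 from
    funext fun i => (h i).1 i rfl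
  intro k
  induction k with
  | zero =>
    refine ⟨h0, fun l hl => ?_⟩
    have key := congrFun hx ⟨0, by omega⟩
    rw [vecMul_triA_apply_of_val_eq_zero a x rfl hl] at key
    simpa [ha 0 (by omega)] using key
  | succ k ih =>
    refine ⟨ih.2, fun l hl => ?_⟩
    have key := congrFun hx ⟨k + 1, by omega⟩
    rw [vecMul_triA_apply_of_val_eq_succ a x (i := ⟨k, by omega⟩) rfl hl,
      ih.1 _ rfl] at key
    simpa [ha (k + 1) (by omega)] using key

section Intertwining

variable {M : Matrix (Fin n) (Fin n) ℝ}

theorem isDiagCol_one (hM : M * triA n a = triA n b * M) {i₀ i₁ : Fin n}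
    (h₀ : (i₀ : ℕ) = 0) (h₁ : (i₁ : ℕ) = 1) (ha : a 0 ≠ 0) (hcol : IsDiagCol M i₀) :
    IsDiagCol M i₁ ∧ M i₁ i₁ * a 0 = b 0 * M i₀ i₀ := by
  have key : ∀ r, M r i₁ * a 0 = -(triA n b r i₀ * M i₀ i₀) := fun r => by
    have := congrFun (congrFun hM r) i₀
    rw [mul_apply_eq_vecMul, vecMul_triA_apply_of_val_eq_zero a (M r) h₀ h₁,
      mul_apply_of_isDiagCol hcol] at this
    linarith
  refine ⟨fun r hr => ?_, ?_⟩
  · have hr' : (r : ℕ) ≠ 1 := fun h => hr (Fin.ext (h.trans h₁.symm))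
    have := key r
    simp only [triA_apply, h₀] at this
    rw [if_neg (by omega), if_neg (by omega)] at this
    simpa [ha] using this
  · simpa [triA_apply, h₀, h₁] using key i₁

theorem isDiagCol_add_two (hM : M * triA n a = triA n b * M) {i j l : Fin n}
    (hj : (j : ℕ) = i + 1) (hl : (l : ℕ) = i + 2) (ha : a j ≠ 0)
    (hci : IsDiagCol M i) (hcj : IsDiagCol M j) (hrel : M i i * a i = b i * M j j) :
    IsDiagCol M l ∧ M l l * a j = b j * M j j := by
  have key : ∀ r, M r l * a j = M r i * a i - triA n b r j * M j j := fun r => by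
    have := congrFun (congrFun hM r) j
    rw [mul_apply_eq_vecMul, vecMul_triA_apply_of_val_eq_succ a (M r) hj hl,
      mul_apply_of_isDiagCol hcj] at this
    linarith
  have hli : l ≠ i := fun h => by omega
  refine ⟨fun r hr => ?_, ?_⟩
  · by_cases hri : r = i
    · have := key i
      rw [triA_apply, if_pos hj.symm] at this
      simpa [hri, ha, hrel] using this
    · have := key r
      have hr' : (r : ℕ) ≠ l := fun h => hr (Fin.ext h)
      have hri' : (r : ℕ) ≠ i := fun h => hri (Fin.ext h)
      simp only [triA_apply] at this
      rw [if_neg (by omega), if_neg (by omega), hci r hri] at this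
      simpa [ha] using this
  · have := key l
    simp only [triA_apply] at this
    rw [if_neg (by omega), if_pos (by omega), hci l hli] at this
    linarith

theorem isDiagCol_zero (hM : M * triA n a = triA n b * M) (hb : ∀ k, k + 1 < n → b k ≠ 0)
    {i₀ i₁ : Fin n} (h₀ : (i₀ : ℕ) = 0) (h₁ : (i₁ : ℕ) = 1) (hcol : IsDiagCol M i₁)
    (hrel : M i₁ i₁ * a 0 = b 0 * M i₀ i₀) : IsDiagCol M i₀ := by
  set x : Fin n → ℝ := Mᵀ i₀ - Pi.single i₀ (M i₀ i₀)
  have hx : x ᵥ* triA n b = 0 := by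
    funext r
    have := congrFun (congrFun hM r) i₀
    have hrow : (Mᵀ i₀ ᵥ* triA n b) r = M r i₁ * a 0 := by
      rw [mul_apply_eq_vecMul, vecMul_triA_apply_of_val_eq_zero a (M r) h₀ h₁] at this
      change _ = (triA n b *ᵥ Mᵀ i₀) r at this
      rw [triA_mulVec] at this
      simpa using this.symm
    rw [sub_vecMul, single_vecMul, Pi.sub_apply, hrow]
    by_cases hr : r = i₁
    · simp [hr, triA_apply, h₀, h₁, hrel, mul_comm]
    · have hr' : (r : ℕ) ≠ 1 := fun h => hr (Fin.ext (h.trans h₁.symm))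
      simp [hcol r hr, triA_apply, h₀]
      omega
  have := eq_zero_of_vecMul_triA_eq_zero hb hx fun i hi => by
    simp [x, show i = i₀ from Fin.ext (hi.trans h₀.symm)]
  intro r hr
  simpa [x, hr] using congrFun this r

end Intertwining

def IsDiagPair (S : Matrix (Fin n) (Fin n) ℝ) (a b : ℕ → ℝ) (i j : Fin n) : Prop :=
  IsDiagCol S i ∧ IsDiagCol S j ∧ IsDiagCol Sᵀ i ∧ IsDiagCol Sᵀ j ∧
    S i i * a i = b i * S j j ∧ S i i * b i = a i * S j j

section Pair

variable {S : Matrix (Fin n) (Fin n) ℝ}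

theorem IsDiagPair.succ (hS : S * triA n a = triA n b * S) {i j l : Fin n}
    (hj : (j : ℕ) = i + 1) (hl : (l : ℕ) = i + 2) (ha : a j ≠ 0) (hb : b j ≠ 0)
    (hp : IsDiagPair S a b i j) : IsDiagPair S a b j l := by
  obtain ⟨hci, hcj, hri, hrj, hrel, hrel'⟩ := hp
  obtain ⟨hcl, hl₁⟩ := isDiagCol_add_two hS hj hl ha hci hcj hrel
  obtain ⟨hrl, hl₂⟩ := isDiagCol_add_two (transpose_mul_triA hS) hj hl hb hri hrj hrel'
  simp only [transpose_apply] at hl₂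
  exact ⟨hcj, hcl, hrj, hrl, by linarith, by linarith⟩

theorem IsDiagPair.abs_diag_eq {i j : Fin n} (hp : IsDiagPair S a b i j) (ha : a i ≠ 0)
    (hb : b i ≠ 0) : |S i i| = |S j j| := by
  obtain ⟨-, -, -, -, hrel, hrel'⟩ := hp
  have : S i i * S i i = S j j * S j j := mul_right_cancel₀ (mul_ne_zero ha hb) <| by
    linear_combination (S i i * b i) * hrel + (b i * S j j) * hrel'
  exact abs_eq_abs.2 (mul_self_eq_mul_self_iff.1 this)

theorem isDiagPair_zero_one (hS : S * triA n a = triA n b * S) (ha : ∀ k, k + 1 < n → a k ≠ 0)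
    {i₀ i₁ : Fin n} (h₀ : (i₀ : ℕ) = 0) (h₁ : (i₁ : ℕ) = 1)
    (hcol : S *ᵥ Pi.single i₀ 1 = Pi.single i₀ 1) (hrow : Pi.single i₁ 1 ᵥ* S = Pi.single i₁ 1) :
    IsDiagPair S a b i₀ i₁ := by
  rw [mulVec_single_one] at hcol
  rw [single_one_vecMul] at hrow
  have hS₀ : S i₀ i₀ = 1 := by simpa using congrFun hcol i₀
  have hS₁ : S i₁ i₁ = 1 := by simpa using congrFun hrow i₁
  have hc₀ : IsDiagCol S i₀ := fun r hr => by simpa [hr] using congrFun hcol r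
  have hr₁ : IsDiagCol Sᵀ i₁ := fun c hc => by simpa [hc] using congrFun hrow c
  obtain ⟨hc₁, hrel⟩ := isDiagCol_one hS h₀ h₁ (ha 0 (by omega)) hc₀
  have hab : a 0 = b 0 := by simpa [hS₀, hS₁] using hrel
  have hr₀ := isDiagCol_zero (transpose_mul_triA hS) ha h₀ h₁ hr₁ (by simp [hS₀, hS₁, hab])
  exact ⟨hc₀, hc₁, hr₀, hr₁, by simp [hS₀, hS₁, h₀, hab], by simp [hS₀, hS₁, h₀, hab]⟩

theorem isDiagPair_of_zero_one (hS : S * triA n a = triA n b * S)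
    (ha : ∀ k, k + 1 < n → a k ≠ 0) (hb : ∀ k, k + 1 < n → b k ≠ 0) {i₀ i₁ : Fin n}
    (h₀ : (i₀ : ℕ) = 0) (h₁ : (i₁ : ℕ) = 1) (hbase : IsDiagPair S a b i₀ i₁)
    (i j : Fin n) (hj : (j : ℕ) = i + 1) : IsDiagPair S a b i j := by
  induction hk : (i : ℕ) generalizing i j with
  | zero =>
    obtain rfl : i = i₀ := Fin.ext (hk.trans h₀.symm)
    obtain rfl : j = i₁ := Fin.ext (by omega)
    exact hbase
  | succ k ih =>
    exact (ih ⟨k, by omega⟩ i hk rfl).succ hS hk (by dsimp only; omega)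
      (ha _ (by omega)) (hb _ (by omega))

end Pair

end

theorem stmt_5 (n : ℕ) (hn : 2 ≤ n) (h h' : ℕ → ℝ)
    (hh : ∀ i, i < n - 1 → h i ≠ 0) (hh' : ∀ i, i < n - 1 → h' i ≠ 0)
    (S : Matrix (Fin n) (Fin n) ℝ)
    (hB : S.mulVec (Pi.single ⟨0, by omega⟩ 1) = Pi.single ⟨0, by omega⟩ 1)
    (hC : Matrix.vecMul (Pi.single ⟨1, by omega⟩ 1) S = Pi.single ⟨1, by omega⟩ 1)
    (hAS : S * triA n h = triA n h' * S) :
    (∀ i j : Fin n, i ≠ j → S i j = 0)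
    ∧ S ⟨0, by omega⟩ ⟨0, by omega⟩ = 1
    ∧ (∀ i : Fin n, S i i = 1 ∨ S i i = -1)
    ∧ ∀ i, i < n - 1 → |h i| = |h' i| := by
  have ha : ∀ k, k + 1 < n → h k ≠ 0 := fun k hk => hh k (by omega)
  have hb : ∀ k, k + 1 < n → h' k ≠ 0 := fun k hk => hh' k (by omega)
  have pair := isDiagPair_of_zero_one hAS ha hb rfl rfl (isDiagPair_zero_one hAS ha rfl rfl hB hC)
  have hS₀ : S ⟨0, by omega⟩ ⟨0, by omega⟩ = 1 := by
    simpa [mulVec_single_one] using congrFun hB ⟨0, by omega⟩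
  have habs : ∀ i : Fin n, |S i i| = 1 := by
    intro i
    induction hk : (i : ℕ) generalizing i with
    | zero => rw [show i = ⟨0, by omega⟩ from Fin.ext hk, hS₀, abs_one]
    | succ k ih =>
      rw [← (pair ⟨k, by omega⟩ i hk).abs_diag_eq (ha k (by omega)) (hb k (by omega)), ih _ rfl]
  refine ⟨fun i j hij => ?_, hS₀, fun i => (abs_eq zero_le_one).1 (habs i), fun k hk => ?_⟩
  · rcases Nat.lt_or_ge ((j : ℕ) + 1) n with hj | hj
    · exact (pair j ⟨j + 1, hj⟩ rfl).1 i hij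
    · exact (pair ⟨j - 1, by omega⟩ j (by simp; omega)).2.1 i hij
  · obtain ⟨-, -, -, -, hrel, -⟩ := pair ⟨k, by omega⟩ ⟨k + 1, by omega⟩ rfl
    simpa [abs_mul, habs] using congrArg abs hrel
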